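/- For every tree T, Tr(T) − 1 ≤ TTr(T) ≤ Tr(T), where Tr(T) is the transitivity of T and TTr(T) is the tournament transitivity of T. -/

import Mathlib

/-!
Let `V₀, …, V_{k-1}` be a transitive partition of a forest with `k ≥ 3`, and pick
`r ∈ V_{k-1}`. Let `S` be the set of vertices from which a walk along which the class strictly
increases leads to `r`. Such walks are paths, hence unique in a forest, so every vertex of `S`
has at most one neighbour in `S` of higher class. Now make `{r}` the top class, put every other
vertex of `S` into its class capped at `k - 3`, and everything else into class `0`. A vertex of
`S` of class `c` has neighbours of every class below `c`, all of them in `S`, which gives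
domination. For `i < j`, class `j` fails to dominate class `i` at a child of `r` of class `i`
or, when `j` is the top class, at a class-`i` child of a class-`(i+1)` child of `r`: its only
neighbour in `S` of higher class is its parent, which is not in class `j`.
-/

open SimpleGraph

variable {V : Type*}

/-- `A` dominates `B` if every vertex of `B` has a neighbour in `A`. -/
def Dominates (G : SimpleGraph V) (A B : Set V) : Prop :=
  ∀ b ∈ B, ∃ a ∈ A, G.Adj a b

/-- An ordered partition `V₁,…,V_k` (encoded as `f : V → Fin k`, surjective,
with `V_i = f ⁻¹' {i}`) is a transitive partition if `V_i` dominates `V_j` for `i < j`. -/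
def IsTrPartition (G : SimpleGraph V) {k : ℕ} (f : V → Fin k) : Prop :=
  Function.Surjective f ∧
    ∀ i j : Fin k, i < j → Dominates G (f ⁻¹' {i}) (f ⁻¹' {j})

/-- Tournament transitive partition: additionally `V_j` does not dominate `V_i` for `i < j`. -/
def IsTTPartition (G : SimpleGraph V) {k : ℕ} (f : V → Fin k) : Prop :=
  Function.Surjective f ∧
    ∀ i j : Fin k, i < j →
      Dominates G (f ⁻¹' {i}) (f ⁻¹' {j}) ∧ ¬ Dominates G (f ⁻¹' {j}) (f ⁻¹' {i})

/-- Transitivity: the maximum size of a transitive partition. -/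
noncomputable def Tr (G : SimpleGraph V) : ℕ :=
  sSup {k | ∃ f : V → Fin k, IsTrPartition G f}

/-- Tournament transitivity: the maximum size of a tournament transitive partition. -/
noncomputable def TTr (G : SimpleGraph V) : ℕ :=
  sSup {k | ∃ f : V → Fin k, IsTTPartition G f}

namespace SimpleGraph

variable {G : SimpleGraph V} {α : Type*} [Preorder α] {f : V → α}

def Walk.IsAscending (f : V → α) {u v : V} (p : G.Walk u v) : Prop :=
  (p.support.map f).IsChain (· < ·)

lemma Walk.IsAscending.isPath {u v : V} {p : G.Walk u v} (hp : p.IsAscending f) : p.IsPath :=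
  Walk.IsPath.mk' <| (List.isChain_iff_pairwise.mp hp).nodup.of_map f

lemma Walk.IsAscending.cons {u v w : V} {p : G.Walk v w} (hp : p.IsAscending f) (h : G.Adj u v)
    (hlt : f u < f v) : (Walk.cons h p).IsAscending f := by
  unfold Walk.IsAscending at hp ⊢
  rw [Walk.support_cons, ← Walk.cons_tail_support, List.map_cons] at *
  exact List.isChain_cons_cons.mpr ⟨hlt, hp⟩

lemma IsAcyclic.eq_of_isAscending (hG : G.IsAcyclic) {u v : V} {p q : G.Walk u v}
    (hp : p.IsAscending f) (hq : q.IsAscending f) : p = q :=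
  congrArg Subtype.val <| (hG.subsingleton_path u v).elim ⟨p, hp.isPath⟩ ⟨q, hq.isPath⟩

def ascentSet (G : SimpleGraph V) (f : V → α) (r : V) : Set V :=
  {v | ∃ p : G.Walk v r, p.IsAscending f}

variable {r : V}

lemma self_mem_ascentSet : r ∈ G.ascentSet f r :=
  ⟨Walk.nil, List.isChain_singleton _⟩

lemma mem_ascentSet_of_adj {u v : V} (hv : v ∈ G.ascentSet f r) (h : G.Adj u v)
    (hlt : f u < f v) : u ∈ G.ascentSet f r :=
  let ⟨p, hp⟩ := hv
  ⟨Walk.cons h p, hp.cons h hlt⟩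

lemma IsAcyclic.eq_of_adj_of_mem_ascentSet (hG : G.IsAcyclic) {u v w : V}
    (hv : v ∈ G.ascentSet f r) (hw : w ∈ G.ascentSet f r) (huv : G.Adj u v) (huw : G.Adj u w)
    (hv' : f u < f v) (hw' : f u < f w) : v = w := by
  obtain ⟨p, hp⟩ := hv
  obtain ⟨q, hq⟩ := hw
  exact (Walk.cons.inj (hG.eq_of_isAscending (hp.cons huv hv') (hq.cons huw hw'))).1

end SimpleGraph

variable {G : SimpleGraph V}

lemma IsTTPartition.isTrPartition {k : ℕ} {f : V → Fin k} (hf : IsTTPartition G f) :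
    IsTrPartition G f :=
  ⟨hf.1, fun i j hij => (hf.2 i j hij).1⟩

lemma isTTPartition_const [Nonempty V] : IsTTPartition G (fun _ : V => (0 : Fin 1)) :=
  ⟨fun _ => ⟨Classical.arbitrary V, Subsingleton.elim _ _⟩,
    fun i j hij => absurd hij (Subsingleton.elim i j ▸ lt_irrefl i)⟩

lemma IsTrPartition.exists_adj_mem_ascentSet {k : ℕ} {f : V → Fin k} (hf : IsTrPartition G f)
    {r v : V} (hv : v ∈ G.ascentSet f r) {c : Fin k} (hc : c < f v) :
    ∃ u ∈ G.ascentSet f r, G.Adj v u ∧ f u = c := by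
  obtain ⟨u, rfl, huv⟩ := hf.2 c (f v) hc v rfl
  exact ⟨u, mem_ascentSet_of_adj hv huv hc, huv.symm, rfl⟩

section AscentCollapse

variable {m : ℕ} {f : V → Fin (m + 3)} {r : V}

open Classical in
noncomputable def ascentCollapse (G : SimpleGraph V) (f : V → Fin (m + 3)) (r v : V) :
    Fin (m + 2) :=
  if v = r then Fin.last (m + 1)
  else if v ∈ G.ascentSet f r then ⟨min (f v) m, by omega⟩ else 0

lemma ascentCollapse_self : ascentCollapse G f r r = Fin.last (m + 1) := if_pos rfl

lemma val_ascentCollapse_of_mem {v : V} (hv : v ∈ G.ascentSet f r) (hvr : v ≠ r) :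
    (ascentCollapse G f r v : ℕ) = min (f v : ℕ) m := by
  simp only [ascentCollapse, if_neg hvr, if_pos hv]

lemma ascentCollapse_of_notMem {v : V} (hv : v ∉ G.ascentSet f r) :
    ascentCollapse G f r v = 0 := by
  have hvr : v ≠ r := fun h => hv (h ▸ self_mem_ascentSet)
  simp only [ascentCollapse, if_neg hvr, if_neg hv]

lemma ascentCollapse_eq_last_iff {v : V} :
    ascentCollapse G f r v = Fin.last (m + 1) ↔ v = r := by
  refine ⟨fun h => ?_, fun h => h ▸ ascentCollapse_self⟩
  by_contra hvr
  by_cases hv : v ∈ G.ascentSet f r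
  · have := congrArg Fin.val h
    rw [val_ascentCollapse_of_mem hv hvr, Fin.val_last] at this
    omega
  · rw [ascentCollapse_of_notMem hv] at h
    exact absurd (congrArg Fin.val h) (by simp)

lemma mem_ascentSet_of_lt_ascentCollapse (hr : f r = Fin.last (m + 2)) {v : V} {i : Fin (m + 2)}
    (h : i < ascentCollapse G f r v) :
    v ∈ G.ascentSet f r ∧ i.castSucc < f v := by
  by_cases hvr : v = r
  · subst hvr
    exact ⟨self_mem_ascentSet, hr ▸ Fin.castSucc_lt_last i⟩
  by_cases hv : v ∈ G.ascentSet f r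
  · refine ⟨hv, ?_⟩
    rw [Fin.lt_def, val_ascentCollapse_of_mem hv hvr] at h
    rw [Fin.lt_def, Fin.val_castSucc]
    omega
  · rw [ascentCollapse_of_notMem hv] at h
    exact absurd h (Fin.not_lt_zero i)

lemma IsTrPartition.exists_adj_ascentCollapse_eq (hf : IsTrPartition G f)
    (hr : f r = Fin.last (m + 2)) {v : V} (hv : v ∈ G.ascentSet f r) {i : Fin (m + 2)}
    (hi : i ≠ Fin.last (m + 1)) (hlt : i.castSucc < f v) :
    ∃ u ∈ G.ascentSet f r, G.Adj v u ∧ f u = i.castSucc ∧ ascentCollapse G f r u = i := by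
  obtain ⟨u, hu, hvu, hfu⟩ := hf.exists_adj_mem_ascentSet hv hlt
  have hur : u ≠ r := by
    rintro rfl
    exact Fin.castSucc_ne_last i (hfu.symm.trans hr)
  refine ⟨u, hu, hvu, hfu, Fin.ext ?_⟩
  rw [val_ascentCollapse_of_mem hu hur, hfu, Fin.val_castSucc]
  have := Fin.val_lt_last hi
  omega

lemma IsTrPartition.not_dominates_ascentCollapse (hf : IsTrPartition G f)
    (hr : f r = Fin.last (m + 2)) (hG : G.IsAcyclic) {i j : Fin (m + 2)} (hij : i < j) :
    ¬ Dominates G (ascentCollapse G f r ⁻¹' {j}) (ascentCollapse G f r ⁻¹' {i}) := by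
  have hi : i ≠ Fin.last (m + 1) := (hij.trans_le (Fin.le_last j)).ne
  have hrS : r ∈ G.ascentSet f r := self_mem_ascentSet
  obtain ⟨x, p, hxS, hpS, hpx, hfx, hfp, hx, hp⟩ : ∃ x p, x ∈ G.ascentSet f r ∧
      p ∈ G.ascentSet f r ∧ G.Adj p x ∧ f x = i.castSucc ∧ i.castSucc < f p ∧
      ascentCollapse G f r x = i ∧ ascentCollapse G f r p ≠ j := by
    by_cases hj : j = Fin.last (m + 1)
    · obtain ⟨p, hpS, hrp, hfp⟩ := hf.exists_adj_mem_ascentSet hrS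
        (c := i.succ) (hr ▸ Fin.lt_last_iff_ne_last.2 (Fin.succ_ne_last_of_lt hij))
      obtain ⟨x, hxS, hpx, hfx, hx⟩ :=
        hf.exists_adj_ascentCollapse_eq hr hpS hi (hfp ▸ Fin.castSucc_lt_succ)
      refine ⟨x, p, hxS, hpS, hpx, hfx, hfp ▸ Fin.castSucc_lt_succ, hx, ?_⟩
      rw [hj, Ne, ascentCollapse_eq_last_iff]
      rintro rfl
      exact Fin.succ_ne_last_of_lt hij (hfp.symm.trans hr)
    · obtain ⟨x, hxS, hrx, hfx, hx⟩ :=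
        hf.exists_adj_ascentCollapse_eq hr hrS hi (hr ▸ Fin.castSucc_lt_last i)
      exact ⟨x, r, hxS, hrS, hrx, hfx, hr ▸ Fin.castSucc_lt_last i, hx,
        ascentCollapse_self.trans_ne (Ne.symm hj)⟩
  intro hdom
  obtain ⟨y, hy, hyx⟩ := hdom x hx
  obtain ⟨hyS, hfy⟩ :=
    mem_ascentSet_of_lt_ascentCollapse hr (hij.trans_eq (Set.mem_singleton_iff.1 hy).symm)
  have hyp : y = p := hG.eq_of_adj_of_mem_ascentSet hyS hpS hyx.symm hpx.symm
    (hfx ▸ hfy) (hfx ▸ hfp)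
  exact hp (hyp ▸ hy)

end AscentCollapse

theorem IsTrPartition.exists_isTTPartition (hG : G.IsAcyclic) {m : ℕ} {f : V → Fin (m + 3)}
    (hf : IsTrPartition G f) : ∃ g : V → Fin (m + 2), IsTTPartition G g := by
  obtain ⟨r, hr⟩ := hf.1 (Fin.last (m + 2))
  refine ⟨ascentCollapse G f r, fun i => ?_,
    fun i j hij => ⟨?_, hf.not_dominates_ascentCollapse hr hG hij⟩⟩
  · by_cases hi : i = Fin.last (m + 1)
    · exact ⟨r, hi ▸ ascentCollapse_self⟩
    · obtain ⟨u, -, -, -, hu⟩ :=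
        hf.exists_adj_ascentCollapse_eq hr self_mem_ascentSet hi (hr ▸ Fin.castSucc_lt_last i)
      exact ⟨u, hu⟩
  · intro v hv
    obtain ⟨hvS, hlt⟩ :=
      mem_ascentSet_of_lt_ascentCollapse hr (hij.trans_eq (Set.mem_singleton_iff.1 hv).symm)
    obtain ⟨u, -, hvu, -, hu⟩ :=
      hf.exists_adj_ascentCollapse_eq hr hvS (hij.trans_le (Fin.le_last j)).ne hlt
    exact ⟨u, hu, hvu.symm⟩

lemma bddAbove_setOf_isTrPartition [Finite V] (G : SimpleGraph V) :
    BddAbove {k | ∃ f : V → Fin k, IsTrPartition G f} :=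
  ⟨Nat.card V, fun k ⟨f, hf⟩ => by simpa using Nat.card_le_card_of_surjective f hf.1⟩

theorem stmt_15 [Fintype V] (T : SimpleGraph V) (h : T.IsTree) :
    Tr T - 1 ≤ TTr T ∧ TTr T ≤ Tr T := by
  have := h.connected.nonempty
  have hsub : {k | ∃ f : V → Fin k, IsTTPartition T f} ⊆
      {k | ∃ f : V → Fin k, IsTrPartition T f} := fun _ ⟨f, hf⟩ => ⟨f, hf.isTrPartition⟩
  have hTr := bddAbove_setOf_isTrPartition T
  have hTTr := hTr.mono hsub
  have hTT₁ : 1 ∈ {k | ∃ f : V → Fin k, IsTTPartition T f} :=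
    ⟨fun _ => 0, isTTPartition_const⟩
  refine ⟨?_, csSup_le_csSup hTr ⟨1, hTT₁⟩ hsub⟩
  rcases Nat.lt_or_ge (Tr T) 3 with hlt | hge
  · calc Tr T - 1 ≤ 1 := by omega
      _ ≤ TTr T := le_csSup hTTr hTT₁
  obtain ⟨m, hm⟩ := Nat.exists_eq_add_of_le' hge
  have hmem : Tr T ∈ {k | ∃ f : V → Fin k, IsTrPartition T f} :=
    Nat.sSup_mem ⟨1, hsub hTT₁⟩ hTr
  rw [hm] at hmem
  obtain ⟨f, hf⟩ := hmem
  obtain ⟨g, hg⟩ := hf.exists_isTTPartition h.isAcyclic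
  calc Tr T - 1 = m + 2 := by omega
    _ ≤ TTr T := le_csSup hTTr ⟨g, hg⟩
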